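/- Let n ≥ 1, a ≥ 0, r > 0, and let φ : (0,r) → ℝ be a differentiable function satisfying φ'(t) ≤ −(1/n) φ(t)² for all t ∈ (0,r) and lim_{t→0} φ(t) ≤ n a. Then φ(t) ≤ n a / (1 + t a) for all t ∈ (0,r). (This is the Riccati comparison used for tr(Q(t)) = d/dt log det P(t) in the proof of the Jacobian monotonicity, with a = f(x̄)^{1/(n-1)}.) -/

import Mathlib

/-!
Where `φ > 0`, the Riccati inequality `φ' ≤ -κ φ²` says exactly that `1/φ - κ t` is
nondecreasing. Since `φ' ≤ 0`, the function `φ` decreases from its limit `L ≤ b` at `0`, so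
`1/φ(t) - κ t ≥ 1/b`, which rearranges to `φ(t) ≤ b / (1 + κ b t)`.
-/

open Filter Set Topology

theorem AntitoneOn.le_of_tendsto_nhdsGT {α β : Type*} [LinearOrder α] [TopologicalSpace α]
    [OrderTopology α] [DenselyOrdered α] [Preorder β] [TopologicalSpace β]
    [OrderClosedTopology β] {f : α → β} {a b : α} {L : β} (hf : AntitoneOn f (Ioo a b))
    (hlim : Tendsto f (𝓝[>] a) (𝓝 L)) {t : α} (ht : t ∈ Ioo a b) : f t ≤ L := by
  have : NeBot (𝓝[>] a) := nhdsGT_neBot_of_exists_gt ⟨t, ht.1⟩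
  refine ge_of_tendsto hlim ?_
  filter_upwards [Ioo_mem_nhdsGT ht.1] with s hs
  exact hf ⟨hs.1, hs.2.trans ht.2⟩ ht hs.2.le

section Riccati

variable {D : Set ℝ} {φ φ' : ℝ → ℝ} {κ : ℝ}

theorem monotoneOn_of_forall_hasDerivAt_nonneg (hD : Convex ℝ D)
    (hderiv : ∀ t ∈ D, HasDerivAt φ (φ' t) t) (hnonneg : ∀ t ∈ interior D, 0 ≤ φ' t) :
    MonotoneOn φ D :=
  monotoneOn_of_hasDerivWithinAt_nonneg hD
    (fun t ht ↦ (hderiv t ht).continuousAt.continuousWithinAt)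
    (fun t ht ↦ (hderiv t (interior_subset ht)).hasDerivWithinAt) hnonneg

theorem antitoneOn_of_hasDerivAt_le_neg_mul_sq (hD : Convex ℝ D) (hκ : 0 ≤ κ)
    (hderiv : ∀ t ∈ D, HasDerivAt φ (φ' t) t) (hineq : ∀ t ∈ D, φ' t ≤ -κ * φ t ^ 2) :
    AntitoneOn φ D := by
  have hneg : MonotoneOn (-φ) D :=
    monotoneOn_of_forall_hasDerivAt_nonneg hD (fun t ht ↦ (hderiv t ht).neg) fun t ht ↦ by
      have := hineq t (interior_subset ht)
      have : 0 ≤ κ * φ t ^ 2 := by positivity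
      linarith
  exact fun s hs t ht hst ↦ neg_le_neg_iff.mp (hneg hs ht hst)

theorem monotoneOn_inv_sub_mul_of_hasDerivAt_le_neg_mul_sq (hD : Convex ℝ D)
    (hderiv : ∀ t ∈ D, HasDerivAt φ (φ' t) t) (hne : ∀ t ∈ D, φ t ≠ 0)
    (hineq : ∀ t ∈ D, φ' t ≤ -κ * φ t ^ 2) :
    MonotoneOn (fun t ↦ (φ t)⁻¹ - κ * t) D := by
  refine monotoneOn_of_forall_hasDerivAt_nonneg hD
    (fun t ht ↦ ((hderiv t ht).inv (hne t ht)).sub ((hasDerivAt_id t).const_mul κ)) ?_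
  intro t ht
  have hsq : 0 < φ t ^ 2 := by positivity [hne t (interior_subset ht)]
  rw [mul_one, sub_nonneg, le_div_iff₀ hsq]
  linarith [hineq t (interior_subset ht)]

theorem le_div_one_add_mul_of_hasDerivAt_le_neg_mul_sq {r b : ℝ} (hκ : 0 ≤ κ) (hb : 0 ≤ b)
    (hderiv : ∀ t ∈ Ioo 0 r, HasDerivAt φ (φ' t) t)
    (hineq : ∀ t ∈ Ioo 0 r, φ' t ≤ -κ * φ t ^ 2) (hle : ∀ t ∈ Ioo 0 r, φ t ≤ b)
    {t : ℝ} (ht : t ∈ Ioo 0 r) : φ t ≤ b / (1 + κ * b * t) := by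
  rcases le_or_gt (φ t) 0 with hφt | hφt
  · exact hφt.trans (by have := ht.1; positivity)
  have hb_pos : 0 < b := hφt.trans_le (hle t ht)
  have hsub : Ioc 0 t ⊆ Ioo 0 r := Ioc_subset_Ioo_right ht.2
  have hpos : ∀ s ∈ Ioc 0 t, 0 < φ s := fun s hs ↦
    hφt.trans_le (antitoneOn_of_hasDerivAt_le_neg_mul_sq (convex_Ioo 0 r) hκ hderiv hineq
      (hsub hs) ht hs.2)
  have hmono := monotoneOn_inv_sub_mul_of_hasDerivAt_le_neg_mul_sq (convex_Ioc 0 t)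
    (fun s hs ↦ hderiv s (hsub hs)) (fun s hs ↦ (hpos s hs).ne') (fun s hs ↦ hineq s (hsub hs))
  have hbound : ∀ s ∈ Ioo 0 t, b⁻¹ - κ * s ≤ (φ t)⁻¹ - κ * t := fun s hs ↦
    calc b⁻¹ - κ * s ≤ (φ s)⁻¹ - κ * s := by
          gcongr
          exacts [hpos s ⟨hs.1, hs.2.le⟩, hle s (hsub ⟨hs.1, hs.2.le⟩)]
      _ ≤ (φ t)⁻¹ - κ * t := hmono ⟨hs.1, hs.2.le⟩ ⟨ht.1, le_rfl⟩ hs.2.le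
  have hlim : b⁻¹ ≤ (φ t)⁻¹ - κ * t := by
    have : Tendsto (fun s ↦ b⁻¹ - κ * s) (𝓝[>] 0) (𝓝 b⁻¹) :=
      tendsto_nhdsWithin_of_tendsto_nhds <|
        (by fun_prop : Continuous fun s : ℝ ↦ b⁻¹ - κ * s).tendsto' 0 b⁻¹ (by simp)
    refine le_of_tendsto this ?_
    filter_upwards [Ioo_mem_nhdsGT ht.1] with s hs using hbound s hs
  rw [le_div_iff₀ (by have := ht.1; positivity)]
  calc φ t * (1 + κ * b * t) = b * φ t * (b⁻¹ + κ * t) := by field_simp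
    _ ≤ b * φ t * (φ t)⁻¹ := by gcongr; linarith
    _ = b := by field_simp

end Riccati

theorem riccati_comparison_general (n : ℕ) (hn : 1 ≤ n) (a : ℝ) (ha : 0 ≤ a) (r : ℝ)
    (φ φ' : ℝ → ℝ)
    (hderiv : ∀ t ∈ Set.Ioo (0 : ℝ) r, HasDerivAt φ (φ' t) t)
    (hineq : ∀ t ∈ Set.Ioo (0 : ℝ) r, φ' t ≤ -(1 / (n : ℝ)) * φ t ^ 2)
    (L : ℝ) (hlim : Filter.Tendsto φ (nhdsWithin 0 (Set.Ioi (0 : ℝ))) (nhds L))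
    (hL : L ≤ (n : ℝ) * a) :
    ∀ t ∈ Set.Ioo (0 : ℝ) r, φ t ≤ (n : ℝ) * a / (1 + t * a) := by
  intro t ht
  have hn₀ : (n : ℝ) ≠ 0 := Nat.cast_ne_zero.mpr (by omega)
  have hanti := antitoneOn_of_hasDerivAt_le_neg_mul_sq (convex_Ioo 0 r) (by positivity)
    hderiv hineq
  have hle : ∀ s ∈ Ioo 0 r, φ s ≤ n * a := fun s hs ↦ (hanti.le_of_tendsto_nhdsGT hlim hs).trans hL
  have := le_div_one_add_mul_of_hasDerivAt_le_neg_mul_sq (by positivity) (by positivity)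
    hderiv hineq hle ht
  convert this using 2
  field_simp

/-- The Riccati-type ODE comparison principle used for `tr Q(t) = (d/dt) log det P(t)` in the
proof of the Jacobian monotonicity: if `φ' ≤ −(1/n) φ²` on `(0,r)` and
`lim_{t→0⁺} φ(t) ≤ n a` with `a ≥ 0`, then `φ(t) ≤ n a / (1 + t a)` on `(0,r)`. -/
theorem riccati_comparison (n : ℕ) (hn : 1 ≤ n) (a : ℝ) (ha : 0 ≤ a) (r : ℝ) (hr : 0 < r)
    (φ φ' : ℝ → ℝ)
    (hderiv : ∀ t ∈ Set.Ioo (0 : ℝ) r, HasDerivAt φ (φ' t) t)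
    (hineq : ∀ t ∈ Set.Ioo (0 : ℝ) r, φ' t ≤ -(1 / (n : ℝ)) * φ t ^ 2)
    (L : ℝ) (hlim : Filter.Tendsto φ (nhdsWithin 0 (Set.Ioi (0 : ℝ))) (nhds L))
    (hL : L ≤ (n : ℝ) * a) :
    ∀ t ∈ Set.Ioo (0 : ℝ) r, φ t ≤ (n : ℝ) * a / (1 + t * a) :=
  riccati_comparison_general n hn a ha r φ φ' hderiv hineq L hlim hL
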